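/- Let $g = A\,dh^2 + 2B\,dh\,dx + C\,dx^2$ be a smooth metric on $\mathbb{S}^1 \times ]-2,\infty[$ (coordinates $(x,h)$), and let $\nabla$ be the flat connection for which the 1-forms $(h+2)dx + x\,dh$ and $dh$ are parallel. Then $g$ is Hessian with respect to $\nabla$ (i.e. $d^\nabla g^\flat = 0$) if and only if $\partial_h B - \partial_x A + \frac{B}{h+2} = 0$ and $\partial_h C - \partial_x B - \frac{C}{h+2} = 0$. In particular, any metric of the form $g = \frac{1}{\tau(h)}dh^2 + (h+2)\epsilon\,dx^2$ with $\epsilon > 0$ and $\tau > 0$ smooth is Hessian. -/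

import Mathlib

/-- Partial derivative in the first (periodic `x`) variable. -/
noncomputable def pdx (F : ℝ → ℝ → ℝ) (x h : ℝ) : ℝ := deriv (fun x' => F x' h) x

/-- Partial derivative in the second (`h`) variable. -/
noncomputable def pdh (F : ℝ → ℝ → ℝ) (x h : ℝ) : ℝ := deriv (fun h' => F x h') h

/-- The metric `g = A dh² + 2B dh dx + C dx²` on the non-standard integral affine cylinder
`S¹ × ]-2,∞[` (lattice spanned by `(h+2)dx + x dh` and `dh`) is Hessian: `d^∇ g^♭ = 0`,
expressed as closedness of the component 1-forms of `g^♭` in the parallel coframe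
`α₁ = (h+2)dx + x dh`, `α₂ = dh`. -/
def IsHessianNS (A B C : ℝ → ℝ → ℝ) : Prop :=
  ∀ x h : ℝ, -2 < h →
    (pdh (fun x' h' => C x' h' / (h' + 2)) x h
        = pdx (fun x' h' => B x' h' / (h' + 2)) x h) ∧
    (pdh (fun x' h' => B x' h' - x' * C x' h' / (h' + 2)) x h
        = pdx (fun x' h' => A x' h' - x' * B x' h' / (h' + 2)) x h)

lemma slice_x {F : ℝ → ℝ → ℝ}
    (hF : ContDiffOn ℝ (⊤ : ℕ∞) (fun p : ℝ × ℝ => F p.1 p.2) (Set.univ ×ˢ Set.Ioi (-2)))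
    {x h : ℝ} (hh : -2 < h) :
    HasDerivAt (fun x' => F x' h) (pdx F x h) x := by
  have hopen : IsOpen ((Set.univ : Set ℝ) ×ˢ Set.Ioi (-2:ℝ)) := isOpen_univ.prod isOpen_Ioi
  have hmem : ((x, h) : ℝ × ℝ) ∈ (Set.univ : Set ℝ) ×ˢ Set.Ioi (-2:ℝ) := ⟨trivial, hh⟩
  have hdiff : DifferentiableAt ℝ (fun p : ℝ × ℝ => F p.1 p.2) (x, h) :=
    (hF.differentiableOn (by simp)).differentiableAt (hopen.mem_nhds hmem)
  have h1 : HasDerivAt (fun x' => F x' h)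
      (fderiv ℝ (fun p : ℝ × ℝ => F p.1 p.2) (x, h) (1, 0)) x := by
    have := hdiff.hasFDerivAt.comp_hasDerivAt x (HasDerivAt.prodMk (hasDerivAt_id x) (hasDerivAt_const x h))
    exact this
  unfold pdx
  rw [h1.deriv]
  exact h1

lemma slice_h {F : ℝ → ℝ → ℝ}
    (hF : ContDiffOn ℝ (⊤ : ℕ∞) (fun p : ℝ × ℝ => F p.1 p.2) (Set.univ ×ˢ Set.Ioi (-2)))
    {x h : ℝ} (hh : -2 < h) :
    HasDerivAt (fun h' => F x h') (pdh F x h) h := by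
  have hopen : IsOpen ((Set.univ : Set ℝ) ×ˢ Set.Ioi (-2:ℝ)) := isOpen_univ.prod isOpen_Ioi
  have hmem : ((x, h) : ℝ × ℝ) ∈ (Set.univ : Set ℝ) ×ˢ Set.Ioi (-2:ℝ) := ⟨trivial, hh⟩
  have hdiff : DifferentiableAt ℝ (fun p : ℝ × ℝ => F p.1 p.2) (x, h) :=
    (hF.differentiableOn (by simp)).differentiableAt (hopen.mem_nhds hmem)
  have h1 : HasDerivAt (fun h' => F x h')
      (fderiv ℝ (fun p : ℝ × ℝ => F p.1 p.2) (x, h) (0, 1)) h := by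
    have := hdiff.hasFDerivAt.comp_hasDerivAt h (HasDerivAt.prodMk (hasDerivAt_const h x) (hasDerivAt_id h))
    exact this
  unfold pdh
  rw [h1.deriv]
  exact h1

/-- `g` is Hessian iff `∂ₕB - ∂ₓA + B/(h+2) = 0` and `∂ₕC - ∂ₓB - C/(h+2) = 0`;
in particular every `g = (1/τ(h)) dh² + (h+2)ε dx²` with `τ > 0` smooth and `ε > 0`
is Hessian. -/
theorem stmt_5 (A B C : ℝ → ℝ → ℝ)
    (hA : ContDiffOn ℝ (⊤ : ℕ∞) (fun p : ℝ × ℝ => A p.1 p.2) (Set.univ ×ˢ Set.Ioi (-2)))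
    (hB : ContDiffOn ℝ (⊤ : ℕ∞) (fun p : ℝ × ℝ => B p.1 p.2) (Set.univ ×ˢ Set.Ioi (-2)))
    (hC : ContDiffOn ℝ (⊤ : ℕ∞) (fun p : ℝ × ℝ => C p.1 p.2) (Set.univ ×ˢ Set.Ioi (-2)))
    (hAper : ∀ x h, A (x + 1) h = A x h)
    (hBper : ∀ x h, B (x + 1) h = B x h)
    (hCper : ∀ x h, C (x + 1) h = C x h)
    (hmetric : ∀ x h, -2 < h → ∀ u v : ℝ, ¬(u = 0 ∧ v = 0) →
      0 < A x h * u ^ 2 + 2 * B x h * u * v + C x h * v ^ 2) :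
    (IsHessianNS A B C ↔
      ∀ x h : ℝ, -2 < h →
        pdh B x h - pdx A x h + B x h / (h + 2) = 0 ∧
        pdh C x h - pdx B x h - C x h / (h + 2) = 0) ∧
    (∀ (τ : ℝ → ℝ) (ε : ℝ), ContDiffOn ℝ (⊤ : ℕ∞) τ (Set.Ioi (-2)) →
      (∀ h, -2 < h → 0 < τ h) → 0 < ε →
      IsHessianNS (fun _ h => 1 / τ h) (fun _ _ => 0) (fun _ h => (h + 2) * ε)) := by
  constructor
  · have key : ∀ x h : ℝ, -2 < h →
        (pdh (fun x' h' => C x' h' / (h' + 2)) x h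
            = (pdh C x h * (h + 2) - C x h * 1) / (h + 2) ^ 2) ∧
        (pdx (fun x' h' => B x' h' / (h' + 2)) x h = pdx B x h / (h + 2)) ∧
        (pdh (fun x' h' => B x' h' - x' * C x' h' / (h' + 2)) x h
            = pdh B x h - (x * pdh C x h * (h + 2) - x * C x h * 1) / (h + 2) ^ 2) ∧
        (pdx (fun x' h' => A x' h' - x' * B x' h' / (h' + 2)) x h
            = pdx A x h - (1 * B x h + x * pdx B x h) / (h + 2)) := by
      intro x h hh
      have hk : h + 2 ≠ 0 := by intro hcon; linarith
      have hd : HasDerivAt (fun h' : ℝ => h' + 2) 1 h := (hasDerivAt_id h).add_const 2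
      refine ⟨?_, ?_, ?_, ?_⟩
      · have := ((slice_h hC hh (x := x) (h := h)).div hd hk)
        unfold pdh; exact this.deriv
      · have := (slice_x hB hh (x := x) (h := h)).div_const (h + 2)
        unfold pdx; exact this.deriv
      · have h2 : HasDerivAt (fun h' => x * C x h' / (h' + 2))
            ((x * pdh C x h * (h + 2) - x * C x h * 1) / (h + 2) ^ 2) h :=
          ((slice_h hC hh (x := x) (h := h)).const_mul x).div hd hk
        have := (slice_h hB hh (x := x) (h := h)).sub h2
        unfold pdh; exact this.deriv
      · have h2 : HasDerivAt (fun x' => x' * B x' h / (h + 2))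
            ((1 * B x h + x * pdx B x h) / (h + 2)) x :=
          ((hasDerivAt_id x).mul (slice_x hB hh (x := x) (h := h))).div_const (h + 2)
        have := (slice_x hA hh (x := x) (h := h)).sub h2
        unfold pdx; exact this.deriv
    constructor
    · intro H x h hh
      obtain ⟨E1, E2⟩ := H x h hh
      obtain ⟨d1, d2, d3, d4⟩ := key x h hh
      rw [d1, d2] at E1
      rw [d3, d4] at E2
      have hk : h + 2 ≠ 0 := by intro hcon; linarith
      field_simp at E1 E2
      have E1' : pdh C x h * (h + 2) - C x h = pdx B x h * (h + 2) :=
        mul_right_cancel₀ hk (by linear_combination (h + 2) * E1)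
      have E2' : pdh B x h * (h + 2) ^ 2 - (x * pdh C x h * (h + 2) - x * C x h)
          = (pdx A x h * (h + 2) - (B x h + x * pdx B x h)) * (h + 2) :=
        mul_right_cancel₀ hk (by linear_combination (h + 2) * E2)
      have E3' : pdh B x h * (h + 2) = pdx A x h * (h + 2) - B x h :=
        mul_right_cancel₀ hk (by linear_combination E2' + x * E1')
      constructor
      · field_simp
        linear_combination E3'
      · field_simp
        linear_combination E1'
    · intro H x h hh
      obtain ⟨c1, c2⟩ := H x h hh
      obtain ⟨d1, d2, d3, d4⟩ := key x h hh
      rw [d1, d2, d3, d4]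
      have hk : h + 2 ≠ 0 := by intro hcon; linarith
      field_simp at c1 c2
      constructor
      · field_simp
        linear_combination c2
      · field_simp
        linear_combination (h + 2) * c1 - x * c2
  · intro τ ε hτ hτpos hε x h hh
    have hk : h + 2 ≠ 0 := by intro hcon; linarith
    have hev : (fun h' : ℝ => (h' + 2) * ε / (h' + 2)) =ᶠ[nhds h] (fun _ => ε) := by
      filter_upwards [Ioi_mem_nhds hh] with y hy
      have hy' : y + 2 ≠ 0 := by
        have : -2 < y := hy
        intro hcon; linarith
      field_simp
    have hev2 : (fun h' : ℝ => (0:ℝ) - x * ((h' + 2) * ε) / (h' + 2))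
        =ᶠ[nhds h] (fun _ => 0 - x * ε) := by
      filter_upwards [Ioi_mem_nhds hh] with y hy
      have hy' : y + 2 ≠ 0 := by
        have : -2 < y := hy
        intro hcon; linarith
      field_simp
    constructor
    · show pdh _ x h = pdx _ x h
      unfold pdh pdx
      rw [hev.deriv_eq]
      simp
    · show pdh _ x h = pdx _ x h
      unfold pdh pdx
      rw [hev2.deriv_eq]
      have : (fun x' : ℝ => 1 / τ h - x' * 0 / (h + 2)) = fun _ => 1 / τ h := by
        funext x'; ring
      rw [this]
      simp
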